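/- arXiv:2605.31374 — 5 statements merged into one kernel-verified Lean document; each statement's English description precedes it below -/
import Mathlib

section
/- Let n ∈ 2ℕ and let 𝖯 be a connection pattern on {1,…,n} given by a partition (P_j)_{1≤j≤J} into blocks of even size and types (p_j)_{1≤j≤J} ∈ {0,1}^J. If the types p_j are NOT all equal (i.e. both values 0 and 1 occur), then ∑_{τ ∈ 4ℤ ∩ [−n,n]} ∑_{ξ ∈ Ξ_τ} a(ξ,𝖯) = 0. -/
open Finset

lemma aux_even_sum {n : ℕ} (ξ : Fin n → ℤ) (hξ : ∀ i, ξ i = -1 ∨ ξ i = 1)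
    (s : Finset (Fin n)) (hs : Even s.card) : Even (∑ i ∈ s, ξ i) := by
  have h1 : (2:ℤ) ∣ ∑ i ∈ s, (ξ i + 1) :=
    Finset.dvd_sum fun i _ => by rcases hξ i with h | h <;> simp [h]
  have h2 : ∑ i ∈ s, (ξ i + 1) = (∑ i ∈ s, ξ i) + s.card := by
    rw [Finset.sum_add_distrib]; simp
  obtain ⟨k, hk⟩ := h1
  obtain ⟨m, hm⟩ := hs
  rw [h2] at hk
  refine ⟨k - m, ?_⟩
  have : (s.card : ℤ) = m + m := by exact_mod_cast hm
  omega


/-- **Charge completion and combinatorial cancellation.**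
For `n ∈ 2ℕ` and a connection pattern `𝖯` given by a partition `(P j)` of `{1,…,n}`
into blocks of even size together with types `p j ∈ {0,1}` which are NOT all equal
(both values occur), the sum over all `τ ∈ 4ℤ ∩ [−n,n]` and all `ξ ∈ Ξ_τ` of
`a(ξ,𝖯) = (−1)^{∑_j b_j(ξ) p_j}`, with `b_j(ξ) = (1/2) ∑_{i ∈ P j} ξ i`, vanishes. -/
theorem stmt0 (n J : ℕ) (hn : Even n) (hn0 : 0 < n)
    (P : Fin J → Finset (Fin n))
    (hdisj : ∀ j j' : Fin J, j ≠ j' → Disjoint (P j) (P j'))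
    (hcover : ∀ i : Fin n, ∃ j, i ∈ P j)
    (hne : ∀ j, (P j).Nonempty)
    (heven : ∀ j, Even (P j).card)
    (p : Fin J → ℕ) (hp : ∀ j, p j = 0 ∨ p j = 1)
    (hmixed : (∃ j, p j = 0) ∧ (∃ j, p j = 1)) :
    ∑ ξ ∈ Finset.filter (fun ξ => (4 : ℤ) ∣ ∑ i, ξ i)
        (Fintype.piFinset fun _ : Fin n => ({-1, 1} : Finset ℤ)),
      ((-1 : ℚ) ^ (∑ j, ((∑ i ∈ P j, ξ i) / 2) * (p j : ℤ))) = 0 := by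
  obtain ⟨⟨j0, hj0⟩, ⟨j1, hj1⟩⟩ := hmixed
  obtain ⟨b, hb⟩ := hne j0
  obtain ⟨a, ha⟩ := hne j1
  have hjne : j1 ≠ j0 := by intro h; rw [h, hj0] at hj1; omega
  have hab : a ≠ b := fun h =>
    (Finset.disjoint_left.mp (hdisj j1 j0 hjne) ha) (h ▸ hb)
  have hanot : ∀ j, j ≠ j1 → a ∉ P j := fun j hj hmem =>
    (Finset.disjoint_left.mp (hdisj j j1 hj) hmem) ha
  have hbnot : ∀ j, j ≠ j0 → b ∉ P j := fun j hj hmem =>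
    (Finset.disjoint_left.mp (hdisj j j0 hj) hmem) hb
  set σ : (Fin n → ℤ) → (Fin n → ℤ) :=
    fun ξ i => if i = a then -ξ a else if i = b then -ξ b else ξ i with hσ
  refine Finset.sum_involution (fun ξ _ => σ ξ) ?_ ?_ ?_ ?_
  · -- f ξ + f (σ ξ) = 0
    intro ξ hξmem
    rw [Finset.mem_filter, Fintype.mem_piFinset] at hξmem
    have hξ : ∀ i, ξ i = -1 ∨ ξ i = 1 := by
      intro i; have := hξmem.1 i; simpa using this
    -- exponent of σ ξ
    have hterm : ∀ j ∈ (univ : Finset (Fin J)),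
        ((∑ i ∈ P j, σ ξ i) / 2) * (p j : ℤ) =
        ((∑ i ∈ P j, ξ i) / 2) * (p j : ℤ) - (if j = j1 then ξ a else 0) := by
      intro j _
      by_cases hj : j = j1
      · subst hj
        have hbn : b ∉ P j := hbnot _ hjne
        have hsum : ∑ i ∈ P j, σ ξ i = (∑ i ∈ P j, ξ i) - 2 * ξ a := by
          have hpt : ∀ i ∈ P j, σ ξ i = ξ i - (if i = a then 2 * ξ a else 0) := by
            intro i hi
            by_cases h1 : i = a
            · subst h1; simp [hσ]; ring
            · have h2 : i ≠ b := fun h => hbn (h ▸ hi)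
              simp [hσ, h1, h2]
          rw [Finset.sum_congr rfl hpt, Finset.sum_sub_distrib,
            Finset.sum_ite_eq' (P j) a, if_pos ha]
        obtain ⟨k, hk⟩ := aux_even_sum ξ hξ (P j) (heven j)
        rw [hsum, if_pos rfl, hj1]
        push_cast
        have h1 : ((∑ i ∈ P j, ξ i) - 2 * ξ a) / 2 = (∑ i ∈ P j, ξ i) / 2 - ξ a := by
          omega
        rw [h1]; ring
      · by_cases hj' : j = j0
        · subst hj'
          rw [hj0, if_neg hj]
          push_cast
          ring
        · have hsum : ∑ i ∈ P j, σ ξ i = ∑ i ∈ P j, ξ i := by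
            refine Finset.sum_congr rfl fun i hi => ?_
            have h1 : i ≠ a := fun h => hanot j hj (h ▸ hi)
            have h2 : i ≠ b := fun h => hbnot j hj' (h ▸ hi)
            simp [hσ, h1, h2]
          rw [hsum, if_neg hj, sub_zero]
    have hE : (∑ j, ((∑ i ∈ P j, σ ξ i) / 2) * (p j : ℤ)) =
        (∑ j, ((∑ i ∈ P j, ξ i) / 2) * (p j : ℤ)) - ξ a := by
      rw [Finset.sum_congr rfl hterm, Finset.sum_sub_distrib,
        Finset.sum_ite_eq' univ j1, if_pos (Finset.mem_univ j1)]
    rw [hE, zpow_sub₀ (by norm_num : (-1 : ℚ) ≠ 0)]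
    rcases hξ a with h | h <;> rw [h] <;> norm_num <;> ring
  · -- σ ξ ≠ ξ
    intro ξ hξmem _
    rw [Finset.mem_filter, Fintype.mem_piFinset] at hξmem
    have hξa : ξ a = -1 ∨ ξ a = 1 := by have := hξmem.1 a; simpa using this
    intro h
    have := congrFun h a
    simp only [hσ, if_pos rfl] at this
    rcases hξa with h' | h' <;> rw [h'] at this <;> norm_num at this
  · -- σ ξ ∈ s
    intro ξ hξmem
    rw [Finset.mem_filter, Fintype.mem_piFinset] at hξmem ⊢
    have hξ : ∀ i, ξ i = -1 ∨ ξ i = 1 := by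
      intro i; have := hξmem.1 i; simpa using this
    constructor
    · intro i
      simp only [hσ, Finset.mem_insert, Finset.mem_singleton]
      by_cases h1 : i = a
      · rcases hξ a with h | h <;> simp [h1, h]
      · by_cases h2 : i = b
        · rcases hξ b with h | h <;> simp [h1, h2, h, Ne.symm hab]
        · rcases hξ i with h | h <;> simp [h1, h2, h]
    · have hsum : ∑ i, σ ξ i = (∑ i, ξ i) - 2 * ξ a - 2 * ξ b := by
        have hpt : ∀ i ∈ (univ : Finset (Fin n)), σ ξ i =
            ξ i - (if i = a then 2 * ξ a else 0) - (if i = b then 2 * ξ b else 0) := by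
          intro i _
          by_cases h1 : i = a
          · subst h1; simp [hσ, hab]; ring
          · by_cases h2 : i = b
            · subst h2; simp [hσ, h1]; ring
            · simp [hσ, h1, h2]
        rw [Finset.sum_congr rfl hpt]
        rw [Finset.sum_sub_distrib, Finset.sum_sub_distrib,
          Finset.sum_ite_eq' univ a, Finset.sum_ite_eq' univ b,
          if_pos (Finset.mem_univ a), if_pos (Finset.mem_univ b)]
      rw [hsum]
      have hd := hξmem.2
      rcases hξ a with h1 | h1 <;> rcases hξ b with h2 | h2 <;> rw [h1, h2] <;> omega
  · -- involution
    intro ξ _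
    funext i
    by_cases h1 : i = a
    · subst h1; simp [hσ, hab]
    · by_cases h2 : i = b
      · subst h2; simp [hσ, h1, hab, Ne.symm hab]
      · simp [hσ, h1, h2]
end

section
/- The constant c₀ := (1/(8π²)) ∬_{B₁(0)×B₁(0)} log|z−z′| dz dz′ equals −1/32; equivalently, ∬_{B₁(0)×B₁(0)} log|z−z′| dz dz′ = −π²/4, where the double integral is over pairs (z,z′) of points of the closed unit disc in ℝ² with respect to Lebesgue measure, and |·| is the Euclidean norm. -/
/-!
Integrating in polar coordinates reduces everything to circle averages. For `‖z‖ ≤ R`, Jensen's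
formula gives `log (max r ‖z‖)` as the average of `log ‖z - w‖` over the circle `‖w‖ = r`, so the
logarithmic potential of the disc is the radial function
`∫_{‖w‖ ≤ R} log ‖z - w‖ dw = π R² log R + π (‖z‖² - R²) / 2`.
A second polar integration gives `π² R⁴ (log R - 1/4)` for the double integral, which is `-π²/4`
at `R = 1`; a linear isometry `ℝ² ≃ ℂ` moves the integral from `EuclideanSpace ℝ (Fin 2)` to `ℂ`.
-/

open MeasureTheory Real

open Set Metric

section LogIntegrability

variable {E : Type*} [NormedAddCommGroup E] [NormedSpace ℝ E] [FiniteDimensional ℝ E]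
  [Nontrivial E] [MeasurableSpace E] [BorelSpace E] {μ : Measure E} [μ.IsAddHaarMeasure]

lemma posLog_inv_le_two_mul_rpow {t : ℝ} (ht : 0 ≤ t) : log⁺ t⁻¹ ≤ 2 * t ^ (-(1 / 2 : ℝ)) := by
  rw [posLog, max_le_iff, rpow_neg ht, ← inv_rpow ht]
  refine ⟨by positivity, ?_⟩
  have := log_le_rpow_div (inv_nonneg.mpr ht) (one_half_pos (α := ℝ))
  linarith

/-- `log = log⁺ - log⁺ ∘ inv`: the first term is continuous and the second is dominated by
`2 ‖x‖ ^ (-1/2)`, which is locally integrable in every dimension `≥ 1`. -/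
theorem locallyIntegrable_log_norm : LocallyIntegrable (fun x : E ↦ log ‖x‖) μ := by
  have hsing : LocallyIntegrable (fun x : E ↦ log⁺ ‖x‖⁻¹) μ := by
    refine locallyIntegrable_of_norm_le_rpow (α := 1 / 2) (C := 2)
      Module.finrank_pos ?_ (.of_forall fun x ↦ ?_) (by fun_prop)
    · have : (1 : ℝ) ≤ Module.finrank ℝ E := by exact_mod_cast Module.finrank_pos
      linarith
    · rw [norm_of_nonneg posLog_nonneg]
      exact posLog_inv_le_two_mul_rpow (norm_nonneg x)
  have hreg : LocallyIntegrable (fun x : E ↦ log⁺ ‖x‖) μ :=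
    (by fun_prop : Continuous fun x : E ↦ log⁺ ‖x‖).locallyIntegrable
  convert hreg.sub hsing using 1
  ext x
  simp only [Pi.sub_apply, posLog_sub_posLog_inv]

theorem integrableOn_log_norm_sub (z : E) {s : Set E} (hs : IsCompact s) :
    IntegrableOn (fun w ↦ log ‖z - w‖) s μ := by
  have hpre : (z - ·) ⁻¹' ((z - ·) ⁻¹' s) = s := by ext; simp
  rw [← hpre]
  change IntegrableOn ((fun x : E ↦ log ‖x‖) ∘ (z - ·)) _ μ
  rw [(μ.measurePreserving_sub_left z).integrableOn_comp_preimage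
      (Homeomorph.subLeft z).measurableEmbedding]
  exact locallyIntegrable_log_norm.integrableOn_isCompact
    ((Homeomorph.subLeft z).isCompact_preimage.mpr hs)

end LogIntegrability

section Polar

variable {E : Type*} [NormedAddCommGroup E] [NormedSpace ℝ E]

lemma Complex.polarCoord_symm_eq_circleMap (p : ℝ × ℝ) :
    Complex.polarCoord.symm p = circleMap 0 p.1 p.2 := by
  simp [circleMap, Complex.exp_mul_I, ← Complex.ofReal_cos, ← Complex.ofReal_sin]

theorem Complex.integrableOn_polarCoord_symm_iff (g : ℂ → E) :
    IntegrableOn (fun p ↦ p.1 • g (Complex.polarCoord.symm p)) polarCoord.target ↔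
      Integrable g := by
  rw [← (Complex.volume_preserving_equiv_real_prod.symm).integrable_comp_emb
      Complex.measurableEquivRealProd.symm.measurableEmbedding,
    ← integrableOn_univ, ← integrableOn_congr_set_ae polarCoord_source_ae_eq_univ,
    ← polarCoord.symm_image_target_eq_source,
    integrableOn_image_iff_integrableOn_abs_det_fderiv_smul volume (s := polarCoord.target)
      polarCoord.open_target.measurableSet
      (fun p _ ↦ (hasFDerivAt_polarCoord_symm p).hasFDerivWithinAt) polarCoord.symm.injOn]
  refine integrableOn_congr_fun (fun p hp ↦ ?_) polarCoord.open_target.measurableSet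
  simp only [det_fderivPolarCoordSymm, abs_of_pos (show 0 < p.1 from hp.1), Function.comp_apply,
    Complex.measurableEquivRealProd_symm_polarCoord_symm_apply]

lemma setIntegral_Ioo_circleMap_eq_circleAverage [CompleteSpace E] (f : ℂ → E) (r : ℝ) :
    ∫ θ in Ioo (-π) π, f (circleMap 0 r θ) = (2 * π) • circleAverage f 0 r := by
  rw [circleAverage_eq_integral_add (-π), smul_inv_smul₀ two_pi_pos.ne',
    intervalIntegral.integral_comp_add_right (fun θ ↦ f (circleMap 0 r θ)),
    intervalIntegral.integral_of_le (by linarith [pi_pos]), integral_Ioc_eq_integral_Ioo]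
  ring_nf

theorem integral_closedBall_eq_integral_circleAverage [CompleteSpace E] {f : ℂ → E} {R : ℝ}
    (hR : 0 ≤ R) (hf : IntegrableOn f (closedBall 0 R)) :
    ∫ z in closedBall (0 : ℂ) R, f z = ∫ r in 0..R, (2 * π * r) • circleAverage f 0 r := by
  set P := Complex.polarCoord.symm
  have hmeas : MeasurableSet (P ⁻¹' closedBall 0 R) :=
    measurableSet_closedBall.preimage <| Continuous.measurable <| by
      rw [show ⇑P = fun p ↦ circleMap 0 p.1 p.2 from funext Complex.polarCoord_symm_eq_circleMap]
      fun_prop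
  have hind : (fun p : ℝ × ℝ ↦ p.1 • (closedBall 0 R).indicator f (P p)) =
      (P ⁻¹' closedBall 0 R).indicator (fun p ↦ p.1 • f (P p)) := by
    ext p
    by_cases hp : P p ∈ closedBall 0 R <;> simp [hp]
  have hdisc : polarCoord.target ∩ P ⁻¹' closedBall 0 R = Ioc 0 R ×ˢ Ioo (-π) π := by
    ext ⟨r, θ⟩
    simp only [P, mem_inter_iff, polarCoord_target, mem_prod, mem_preimage, mem_closedBall,
      dist_zero_right, Complex.norm_polarCoord_symm, mem_Ioi, mem_Ioc]
    constructor
    · rintro ⟨⟨hr, hθ⟩, hrR⟩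
      exact ⟨⟨hr, (abs_of_pos hr).symm.trans_le hrR⟩, hθ⟩
    · rintro ⟨⟨hr, hrR⟩, hθ⟩
      exact ⟨⟨hr, hθ⟩, (abs_of_pos hr).trans_le hrR⟩
  have hint : IntegrableOn (fun p : ℝ × ℝ ↦ p.1 • f (P p)) (Ioc 0 R ×ˢ Ioo (-π) π) := by
    have := (Complex.integrableOn_polarCoord_symm_iff _).2
      ((integrable_indicator_iff measurableSet_closedBall).2 hf)
    rwa [hind, IntegrableOn, integrable_indicator_iff hmeas, IntegrableOn,
      Measure.restrict_restrict hmeas, inter_comm, hdisc] at this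
  rw [← integral_indicator measurableSet_closedBall, ← Complex.integral_comp_polarCoord_symm, hind,
    setIntegral_indicator hmeas, hdisc, Measure.volume_eq_prod, setIntegral_prod _ hint,
    intervalIntegral.integral_of_le hR]
  refine setIntegral_congr_fun measurableSet_Ioc fun r _ ↦ ?_
  simp only [P, Complex.polarCoord_symm_eq_circleMap]
  rw [integral_smul, setIntegral_Ioo_circleMap_eq_circleAverage, smul_smul, mul_comm r]

end Polar

lemma circleAverage_log_norm_sub_eq_log_max (z : ℂ) {r : ℝ} (hr : 0 < r) :
    circleAverage (fun w ↦ log ‖z - w‖) 0 r = log (max r ‖z‖) := by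
  simp_rw [norm_sub_rev z]
  rw [circleAverage_log_norm_sub_const_eq_log_radius_add_posLog hr.ne', zero_sub, norm_neg,
    posLog_eq_log_max_one (by positivity), ← log_mul hr.ne' (by positivity),
    mul_max_of_nonneg _ _ hr.le, mul_one, mul_inv_cancel_left₀ hr.ne']

lemma integral_mul_log {a b : ℝ} (ha : 0 ≤ a) (hb : 0 ≤ b) :
    ∫ r in a..b, r * log r = b ^ 2 * (2 * log b - 1) / 4 - a ^ 2 * (2 * log a - 1) / 4 := by
  have hcont : Continuous fun r : ℝ ↦ r ^ 2 * (2 * log r - 1) / 4 := by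
    have hmul : Continuous fun r : ℝ ↦ r * (r * log r) / 2 - r ^ 2 / 4 :=
      ((continuous_id.mul continuous_mul_log).div_const 2).sub (by fun_prop)
    convert hmul using 2 with r
    ring
  refine intervalIntegral.integral_eq_sub_of_hasDeriv_right hcont.continuousOn
    (fun r hr ↦ ?_) (continuous_mul_log.intervalIntegrable _ _)
  have hr0 : r ≠ 0 := (lt_of_le_of_lt (le_min ha hb) hr.1).ne'
  refine HasDerivAt.hasDerivWithinAt ?_
  have := ((hasDerivAt_pow 2 r).mul (((hasDerivAt_log hr0).const_mul 2).sub_const 1)).div_const 4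
  exact this.congr_deriv (by field_simp; ring)

theorem integral_closedBall_log_norm_sub {z : ℂ} {R : ℝ} (hz : ‖z‖ ≤ R) :
    ∫ w in closedBall (0 : ℂ) R, log ‖z - w‖ = π * R ^ 2 * log R + π * (‖z‖ ^ 2 - R ^ 2) / 2 := by
  have hR : 0 ≤ R := (norm_nonneg z).trans hz
  rw [integral_closedBall_eq_integral_circleAverage hR
    (integrableOn_log_norm_sub z (isCompact_closedBall 0 R))]
  set m := ‖z‖
  have hm : 0 ≤ m := norm_nonneg z
  have hmax : EqOn (fun r ↦ (2 * π * r) • circleAverage (fun w ↦ log ‖z - w‖) 0 r)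
      (fun r ↦ 2 * π * (r * log (max r m))) (uIcc 0 R) := by
    intro r hr
    rw [uIcc_of_le hR] at hr
    rcases hr.1.eq_or_lt with rfl | hr0
    · simp
    · simp only [smul_eq_mul, circleAverage_log_norm_sub_eq_log_max z hr0, m]
      ring
  set f := fun r ↦ 2 * π * (r * log (max r m))
  have hlow : EqOn f (fun r ↦ 2 * π * log m * r) (uIcc 0 m) := by
    intro r hr
    rw [uIcc_of_le hm] at hr
    simp only [f, max_eq_right hr.2]
    ring
  have hhigh : EqOn f (fun r ↦ 2 * π * (r * log r)) (uIcc m R) := by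
    intro r hr
    rw [uIcc_of_le hz] at hr
    simp only [f, max_eq_left hr.1]
  rw [intervalIntegral.integral_congr hmax, ← intervalIntegral.integral_add_adjacent_intervals
      ((continuous_const.mul continuous_id).continuousOn.congr hlow).intervalIntegrable
      ((continuous_const.mul continuous_mul_log).continuousOn.congr hhigh).intervalIntegrable,
    intervalIntegral.integral_congr hlow, intervalIntegral.integral_congr hhigh,
    intervalIntegral.integral_const_mul, intervalIntegral.integral_const_mul, integral_id,
    integral_mul_log hm hR]
  ring

theorem integral_closedBall_integral_closedBall_log_norm_sub {R : ℝ} (hR : 0 ≤ R) :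
    ∫ z in closedBall (0 : ℂ) R, ∫ w in closedBall (0 : ℂ) R, log ‖z - w‖ =
      π ^ 2 * R ^ 4 * (log R - 1 / 4) := by
  set g := fun z : ℂ ↦ π * R ^ 2 * log R + π * (‖z‖ ^ 2 - R ^ 2) / 2
  have hradial (r : ℝ) : (2 * π * r) • circleAverage g 0 r =
      π ^ 2 * r ^ 3 + (2 * π ^ 2 * R ^ 2 * log R - π ^ 2 * R ^ 2) * r := by
    rw [circleAverage_const_on_circle (a := π * R ^ 2 * log R + π * (r ^ 2 - R ^ 2) / 2)
      fun z hz ↦ by simp only [g, mem_sphere_zero_iff_norm.1 hz, sq_abs], smul_eq_mul]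
    ring
  rw [setIntegral_congr_fun measurableSet_closedBall
      fun z hz ↦ integral_closedBall_log_norm_sub (mem_closedBall_zero_iff.1 hz),
    integral_closedBall_eq_integral_circleAverage hR
      ((by fun_prop : Continuous g).continuousOn.integrableOn_compact (isCompact_closedBall 0 R)),
    intervalIntegral.integral_congr fun r _ ↦ hradial r,
    intervalIntegral.integral_add ((by fun_prop : Continuous _).intervalIntegrable _ _)
      ((by fun_prop : Continuous _).intervalIntegrable _ _),
    intervalIntegral.integral_const_mul, intervalIntegral.integral_const_mul, integral_pow,
    integral_id]
  ring

section Isometry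

variable {E F G : Type*} [NormedAddCommGroup E] [InnerProductSpace ℝ E] [FiniteDimensional ℝ E]
  [MeasurableSpace E] [BorelSpace E] [NormedAddCommGroup F] [InnerProductSpace ℝ F]
  [FiniteDimensional ℝ F] [MeasurableSpace F] [BorelSpace F] [NormedAddCommGroup G]
  [NormedSpace ℝ G]

theorem LinearIsometryEquiv.setIntegral_closedBall_comp (e : E ≃ₗᵢ[ℝ] F) (f : F → G) (R : ℝ) :
    ∫ x in closedBall 0 R, f (e x) = ∫ y in closedBall 0 R, f y := by
  rw [← e.measurePreserving.setIntegral_preimage_emb e.toHomeomorph.measurableEmbedding,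
    e.preimage_closedBall, map_zero]

theorem LinearIsometryEquiv.integral_closedBall_integral_closedBall_norm_sub (e : E ≃ₗᵢ[ℝ] F)
    (g : ℝ → G) (R : ℝ) :
    ∫ x in closedBall (0 : E) R, ∫ y in closedBall (0 : E) R, g ‖x - y‖ =
      ∫ x in closedBall (0 : F) R, ∫ y in closedBall (0 : F) R, g ‖x - y‖ := by
  have hinner (x : E) :
      ∫ y in closedBall (0 : E) R, g ‖x - y‖ = ∫ y in closedBall (0 : F) R, g ‖e x - y‖ := by
    simp_rw [← e.setIntegral_closedBall_comp (fun y ↦ g ‖e x - y‖), ← map_sub, e.norm_map]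
  simp_rw [hinner]
  exact e.setIntegral_closedBall_comp (fun x ↦ ∫ y in closedBall 0 R, g ‖x - y‖) R

end Isometry

/-- The constant `c₀ = (1/(8π²)) ∬_{B₁(0)×B₁(0)} log|z−z′| dz dz′` equals `−1/32`;
equivalently, `∬_{B₁(0)×B₁(0)} log|z−z′| dz dz′ = −π²/4`, the double integral being
over pairs of points of the closed unit disc in `ℝ²` with respect to Lebesgue
measure. -/
theorem stmt5 :
    (1 / (8 * π ^ 2)) *
        (∫ z in Metric.closedBall (0 : EuclideanSpace ℝ (Fin 2)) 1,
          ∫ z' in Metric.closedBall (0 : EuclideanSpace ℝ (Fin 2)) 1,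
            Real.log ‖z - z'‖) = -(1 / 32) ∧
      (∫ z in Metric.closedBall (0 : EuclideanSpace ℝ (Fin 2)) 1,
        ∫ z' in Metric.closedBall (0 : EuclideanSpace ℝ (Fin 2)) 1,
          Real.log ‖z - z'‖) = -(π ^ 2 / 4) := by
  have hdouble : (∫ z in closedBall (0 : EuclideanSpace ℝ (Fin 2)) 1,
      ∫ z' in closedBall (0 : EuclideanSpace ℝ (Fin 2)) 1, log ‖z - z'‖) = -(π ^ 2 / 4) := by
    rw [Complex.orthonormalBasisOneI.repr.symm.integral_closedBall_integral_closedBall_norm_sub log,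
      integral_closedBall_integral_closedBall_log_norm_sub zero_le_one, log_one]
    ring
  refine ⟨?_, hdouble⟩
  rw [hdouble]
  field_simp
  ring
end

section
/- For every ε > 0 and every v ∈ ℝ² with |v| > 2ε, the quantity c_ε(v) := (1/(8π²)) ∬_{B₁(0)×B₁(0)} log(|v+ε(z−z′)|/|v|) dz dz′ satisfies |c_ε(v)| ≤ ε/(4(|v| − 2ε)). -/
/-!
Write `w = ε (z - z')`, so `‖w‖ ≤ 2ε < ‖v‖`. From `log x ≤ x - 1`, applied to `‖v + w‖ / ‖v‖` and to
its inverse, together with `|‖v + w‖ - ‖v‖| ≤ ‖w‖`, the integrand is bounded in absolute value by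
`2ε / (‖v‖ - 2ε)`. Each unit disc has area `π`, so the double integral is at most `π²` times this
bound, and the prefactor `1 / (8π²)` leaves `ε / (4 (‖v‖ - 2ε))`.
-/

open MeasureTheory Real

lemma abs_log_norm_add_div_norm_le {E : Type*} [SeminormedAddCommGroup E] {v w : E} {δ : ℝ}
    (hw : ‖w‖ ≤ δ) (hδ : δ < ‖v‖) : |log (‖v + w‖ / ‖v‖)| ≤ δ / (‖v‖ - δ) := by
  have hgap : 0 < ‖v‖ - δ := sub_pos.mpr hδ
  have hv : 0 < ‖v‖ := (norm_nonneg w).trans_lt (hw.trans_lt hδ)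
  have hlo : ‖v‖ - δ ≤ ‖v + w‖ := by linarith [norm_sub_le_norm_add v w]
  have hhi : ‖v + w‖ ≤ ‖v‖ + δ := by linarith [norm_add_le v w]
  have hvw : 0 < ‖v + w‖ := hgap.trans_le hlo
  rw [abs_le]
  constructor
  · have hlog := log_le_sub_one_of_pos (div_pos hv hvw)
    rw [log_div hv.ne' hvw.ne'] at hlog
    rw [log_div hvw.ne' hv.ne']
    have : ‖v‖ / ‖v + w‖ - 1 ≤ δ / (‖v‖ - δ) := by
      rw [div_sub_one hvw.ne', div_le_div_iff₀ hvw hgap]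
      nlinarith
    linarith
  · calc log (‖v + w‖ / ‖v‖) ≤ ‖v + w‖ / ‖v‖ - 1 := log_le_sub_one_of_pos (div_pos hvw hv)
      _ ≤ δ / (‖v‖ - δ) := by
        rw [div_sub_one hv.ne', div_le_div_iff₀ hv hgap]
        nlinarith

lemma norm_setIntegral_setIntegral_le_of_norm_le_const {X Y E : Type*} [MeasurableSpace X]
    [MeasurableSpace Y] [NormedAddCommGroup E] [NormedSpace ℝ E] {μ : Measure X} {ν : Measure Y}
    {s : Set X} {t : Set Y} {f : X → Y → E} {C : ℝ} (hs : μ s < ⊤) (ht : ν t < ⊤)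
    (hf : ∀ x ∈ s, ∀ y ∈ t, ‖f x y‖ ≤ C) :
    ‖∫ x in s, ∫ y in t, f x y ∂ν ∂μ‖ ≤ C * ν.real t * μ.real s :=
  norm_setIntegral_le_of_norm_le_const hs fun x hx =>
    norm_setIntegral_le_of_norm_le_const ht (hf x hx)

lemma measureReal_closedBall_fin_two (x : EuclideanSpace ℝ (Fin 2)) {r : ℝ} (hr : 0 ≤ r) :
    volume.real (Metric.closedBall x r) = r ^ 2 * π := by
  simp [measureReal_def, ENNReal.toReal_ofReal hr, ENNReal.toReal_ofReal pi_pos.le]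

/-- For every `ε > 0` and `v ∈ ℝ²` with `|v| > 2ε`, the quantity
`c_ε(v) = (1/(8π²)) ∬_{B₁(0)×B₁(0)} log(|v+ε(z−z′)|/|v|) dz dz′`
satisfies `|c_ε(v)| ≤ ε/(4(|v| − 2ε))`. -/
theorem stmt6 (ε : ℝ) (hε : 0 < ε) (v : EuclideanSpace ℝ (Fin 2))
    (hv : 2 * ε < ‖v‖) :
    |(1 / (8 * π ^ 2)) *
        ∫ z in Metric.closedBall (0 : EuclideanSpace ℝ (Fin 2)) 1,
          ∫ z' in Metric.closedBall (0 : EuclideanSpace ℝ (Fin 2)) 1,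
            Real.log (‖v + ε • (z - z')‖ / ‖v‖)|
      ≤ ε / (4 * (‖v‖ - 2 * ε)) := by
  set B := Metric.closedBall (0 : EuclideanSpace ℝ (Fin 2)) 1
  have hB : volume.real B = π := by simp [B, measureReal_closedBall_fin_two]
  have hpoint : ∀ z ∈ B, ∀ z' ∈ B,
      ‖log (‖v + ε • (z - z')‖ / ‖v‖)‖ ≤ 2 * ε / (‖v‖ - 2 * ε) := by
    intro z hz z' hz'
    refine abs_log_norm_add_div_norm_le ?_ hv
    rw [norm_smul, norm_of_nonneg hε.le, mul_comm]
    have hzz' : ‖z - z'‖ ≤ 2 := by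
      have hz1 := mem_closedBall_zero_iff.mp hz
      have hz'1 := mem_closedBall_zero_iff.mp hz'
      linarith [norm_sub_le z z']
    nlinarith
  have hB_finite : volume B < ⊤ := measure_closedBall_lt_top
  have hint := norm_setIntegral_setIntegral_le_of_norm_le_const hB_finite hB_finite hpoint
  rw [hB] at hint
  have hgap : 0 < ‖v‖ - 2 * ε := by linarith
  calc _ = 1 / (8 * π ^ 2) * ‖∫ z in B, ∫ z' in B, log (‖v + ε • (z - z')‖ / ‖v‖)‖ := by
        rw [abs_mul, abs_of_pos (by positivity), norm_eq_abs]
    _ ≤ 1 / (8 * π ^ 2) * (2 * ε / (‖v‖ - 2 * ε) * π * π) := by gcongr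
    _ = ε / (4 * (‖v‖ - 2 * ε)) := by field_simp; ring
end

section
/- Let k ∈ ℕ, let x₁,…,x_{2k} ∈ ℂ be distinct, and let ξ ∈ {−1,+1}^{2k} with ∑_{i=1}^{2k} ξ_i = 0. Set P := {i : ξ_i = +1} and N := {i : ξ_i = −1} (so |P| = |N| = k). Then ∏_{1≤i<j≤2k} |x_i−x_j|^{ξ_iξ_j/4} ≤ ∑_{π} ∏_{i∈P} |x_i − x_{π(i)}|^{−1/4}, where the sum is over all bijections π : P → N. -/
/-!
Let `P = {ξ = 1}`, `N = {ξ = -1}` and fix a bijection `π₀ : P ≃ N`. By Cauchy's determinant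
formula, `∏_{i<j} |x_i - x_j|^{ξ_i ξ_j}` is exactly `|det C|` for the Cauchy matrix
`C_{p p'} = (x_p - x_{π₀ p'})⁻¹`: pairs of equal sign give the Vandermonde-type numerator, pairs
of opposite sign the denominator. Expanding the determinant over permutations bounds `|det C|` by
`∑_π ∏_p |x_p - x_{π p}|⁻¹`, and `t ↦ t^{1/4}` is subadditive.
-/

open Finset Matrix

theorem Finset.prod_prod_Ioi_sq {α M : Type*} [LinearOrder α] [Fintype α]
    [LocallyFiniteOrderTop α] [LocallyFiniteOrderBot α] [CommMonoid M] (f : α → α → M)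
    (hf : ∀ i j, f i j = f j i) :
    (∏ i, ∏ j ∈ Ioi i, f i j) ^ 2 = ∏ i, ∏ j, if i = j then 1 else f i j := by
  calc (∏ i, ∏ j ∈ Ioi i, f i j) ^ 2 = ∏ i, ∏ j ∈ Ioi i, f j i * f i j := by
        rw [sq, ← prod_mul_distrib]
        exact prod_congr rfl fun i _ => by
          rw [← prod_mul_distrib]; exact prod_congr rfl fun j _ => by rw [hf]
    _ = ∏ i, ∏ j ∈ {i}ᶜ, f j i := prod_prod_Ioi_mul_eq_prod_prod_off_diag f
    _ = ∏ i, ∏ j, if i = j then 1 else f i j := by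
        refine prod_congr rfl fun i _ => ?_
        rw [show ({i}ᶜ : Finset α) = univ.filter (fun j => ¬ i = j) by ext; simp [eq_comm],
          prod_filter]
        exact prod_congr rfl fun j _ => by split_ifs <;> simp_all

section Cauchy

variable {K : Type*} [Field K]

theorem Matrix.det_succ_eq_mul_det_schur {n : ℕ} (M : Matrix (Fin (n + 1)) (Fin (n + 1)) K)
    (h : M 0 0 ≠ 0) :
    M.det =
      M 0 0 * (of fun i j : Fin n => M i.succ j.succ - M i.succ 0 / M 0 0 * M 0 j.succ).det := by
  set B : Matrix (Fin (n + 1)) (Fin (n + 1)) K :=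
    of fun i j => if i = 0 then M 0 j else M i j - M i 0 / M 0 0 * M 0 j
  have hMB : M.det = B.det :=
    det_eq_of_forall_row_eq_smul_add_const (fun i => if i = 0 then 0 else M i 0 / M 0 0) 0
      (by simp) fun i j => by by_cases hi : i = 0 <;> simp [B, hi]
  rw [hMB, det_succ_column_zero, Fin.sum_univ_succ]
  simp [B, h]
  rfl

theorem Matrix.det_cauchy_fin {n : ℕ} (a b : Fin n → K) (hab : ∀ i j, a i ≠ b j) :
    (of fun i j => (a i - b j)⁻¹).det =
      (∏ i, ∏ j ∈ Ioi i, (a j - a i) * (b i - b j)) / ∏ i, ∏ j, (a i - b j) := by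
  induction n with
  | zero => simp
  | succ n ih =>
    have hab' : ∀ i j, a i - b j ≠ 0 := fun i j => sub_ne_zero.mpr (hab i j)
    -- the Schur complement of the corner entry is again a Cauchy matrix, rescaled
    have schur : (of fun i j : Fin n => (a i.succ - b j.succ)⁻¹ -
          (a i.succ - b 0)⁻¹ / (a 0 - b 0)⁻¹ * (a 0 - b j.succ)⁻¹).det =
        (∏ i : Fin n, (a 0 - a i.succ) / (a i.succ - b 0)) *
          ((∏ j : Fin n, (b j.succ - b 0) / (a 0 - b j.succ)) *
            (of fun i j : Fin n => (a i.succ - b j.succ)⁻¹).det) := by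
      rw [← det_mul_row, ← det_mul_column]
      congr 1
      ext i j
      simp only [of_apply]
      field_simp [hab' i.succ j.succ, hab' i.succ 0, hab' 0 j.succ, hab' 0 0]
      ring
    rw [det_succ_eq_mul_det_schur _ (by simpa using hab' 0 0)]
    simp only [of_apply]
    rw [schur, ih (fun i => a i.succ) (fun j => b j.succ) (fun i j => hab _ _)]
    have h0 : ∀ j : Fin n,
        (a j.succ - a 0) * (b 0 - b j.succ) = (a 0 - a j.succ) * (b j.succ - b 0) :=
      fun _ => by ring
    rw [Fin.prod_univ_succ (fun i => ∏ j ∈ Ioi i, _), Fin.prod_Ioi_zero,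
      prod_congr rfl fun j _ => h0 j, Fin.prod_univ_succ (fun i => ∏ j, _),
      Fin.prod_univ_succ (fun j => a 0 - b j)]
    simp only [Fin.prod_Ioi_succ, Fin.prod_univ_succ (fun j => a _ - b j), prod_mul_distrib,
      prod_div_distrib]
    have hA : ∏ i : Fin n, (a i.succ - b 0) ≠ 0 := prod_ne_zero_iff.mpr fun i _ => hab' _ _
    have hB : ∏ j : Fin n, (a 0 - b j.succ) ≠ 0 := prod_ne_zero_iff.mpr fun i _ => hab' _ _
    have hC : ∏ i : Fin n, ∏ j : Fin n, (a i.succ - b j.succ) ≠ 0 :=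
      prod_ne_zero_iff.mpr fun i _ => prod_ne_zero_iff.mpr fun j _ => hab' _ _
    field_simp [hab' 0 0]

theorem Matrix.det_cauchy_sq {ι : Type*} [Fintype ι] [DecidableEq ι] (a b : ι → K)
    (hab : ∀ i j, a i ≠ b j) :
    (of fun i j => (a i - b j)⁻¹).det ^ 2 =
      (∏ i, ∏ j, if i = j then 1 else a i - a j) * (∏ i, ∏ j, if i = j then 1 else b i - b j) /
        (∏ i, ∏ j, (a i - b j)) ^ 2 := by
  set e := (Fintype.equivFin ι).symm
  have reindex : ∀ F : ι → ι → K, ∏ i, ∏ j, F (e i) (e j) = ∏ i, ∏ j, F i j := fun F => by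
    rw [← e.prod_comp (fun i => ∏ j, F i j)]
    exact prod_congr rfl fun i _ => e.prod_comp (F (e i))
  have swap : ∏ i, ∏ j, (if i = j then 1 else a i - a j) =
      ∏ i, ∏ j, if i = j then 1 else a j - a i := by
    rw [prod_comm]; simp only [eq_comm]
  rw [← det_submatrix_equiv_self e, swap, ← reindex, ← reindex, ← reindex, ← prod_mul_distrib]
  simp only [e.injective.eq_iff, ← prod_mul_distrib, ite_mul_ite, mul_one]
  erw [det_cauchy_fin (fun i => a (e i)) (fun j => b (e j)) fun i j => hab _ _]
  rw [div_pow, prod_prod_Ioi_sq _ fun i j => by ring]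

end Cauchy

theorem val_pos_ne_val_neg {ι : Type*} {ξ : ι → ℤ} (p : {i // ξ i = 1}) (q : {i // ξ i = -1}) :
    (p : ι) ≠ q := fun h => by
  have := p.2
  rw [h, q.2] at this
  norm_num at this

section SignClasses

variable {ι : Type*} [Fintype ι]

def sumSignClassesEquiv (ξ : ι → ℤ) (hξ : ∀ i, ξ i = -1 ∨ ξ i = 1) :
    {i // ξ i = 1} ⊕ {i // ξ i = -1} ≃ ι :=
  (Equiv.sumCongr (Equiv.refl _) (Equiv.subtypeEquivRight fun i => by
    rcases hξ i with h | h <;> simp [h])).trans (Equiv.sumCompl _)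

@[to_additive]
theorem prod_eq_prod_pos_mul_prod_neg {M : Type*} [CommMonoid M] (ξ : ι → ℤ)
    (hξ : ∀ i, ξ i = -1 ∨ ξ i = 1) (f : ι → M) :
    ∏ i, f i = (∏ p : {i // ξ i = 1}, f p) * ∏ q : {i // ξ i = -1}, f q := by
  rw [← (sumSignClassesEquiv ξ hξ).prod_comp, Fintype.prod_sum_type]
  rfl

theorem card_pos_eq_card_neg (ξ : ι → ℤ) (hξ : ∀ i, ξ i = -1 ∨ ξ i = 1) (hbal : ∑ i, ξ i = 0) :
    Fintype.card {i // ξ i = 1} = Fintype.card {i // ξ i = -1} := by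
  rw [sum_eq_sum_pos_add_sum_neg ξ hξ, sum_congr rfl fun (p : {i // ξ i = 1}) _ => p.2,
    sum_congr rfl fun (q : {i // ξ i = -1}) _ => q.2] at hbal
  simp only [sum_const, card_univ, nsmul_eq_mul, mul_one, mul_neg] at hbal
  omega

theorem prod_offDiag_zpow_sign_mul_sign [DecidableEq ι] {M : Type*} [CommGroupWithZero M]
    (ξ : ι → ℤ) (hξ : ∀ i, ξ i = -1 ∨ ξ i = 1) (f : ι → ι → M) :
    ∏ i, ∏ j, (if i = j then 1 else f i j ^ (ξ i * ξ j)) =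
      (∏ p : {i // ξ i = 1}, ∏ p' : {i // ξ i = 1}, if p = p' then 1 else f p p') *
      (∏ q : {i // ξ i = -1}, ∏ q' : {i // ξ i = -1}, if q = q' then 1 else f q q') *
      ∏ p : {i // ξ i = 1}, ∏ q : {i // ξ i = -1}, (f p q)⁻¹ * (f q p)⁻¹ := by
  have hPP : ∀ p p' : {i // ξ i = 1},
      (if (p : ι) = p' then 1 else f p p' ^ (ξ p * ξ p')) = if p = p' then 1 else f p p' := by
    intro p p'; simp [p.2, p'.2, Subtype.ext_iff]
  have hNN : ∀ q q' : {i // ξ i = -1},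
      (if (q : ι) = q' then 1 else f q q' ^ (ξ q * ξ q')) = if q = q' then 1 else f q q' := by
    intro q q'; simp [q.2, q'.2, Subtype.ext_iff]
  have hPN : ∀ (p : {i // ξ i = 1}) (q : {i // ξ i = -1}),
      (if (p : ι) = q then 1 else f p q ^ (ξ p * ξ q)) = (f p q)⁻¹ := by
    intro p q
    simp [p.2, q.2, val_pos_ne_val_neg p q]
  have hNP : ∀ (q : {i // ξ i = -1}) (p : {i // ξ i = 1}),
      (if (q : ι) = p then 1 else f q p ^ (ξ q * ξ p)) = (f q p)⁻¹ := by
    intro q p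
    simp [p.2, q.2, (val_pos_ne_val_neg p q).symm]
  simp only [prod_eq_prod_pos_mul_prod_neg ξ hξ, hPP, hNN, hPN, hNP, prod_mul_distrib]
  have hswap : ∏ q : {i // ξ i = -1}, ∏ p : {i // ξ i = 1}, (f q p)⁻¹ =
      ∏ p : {i // ξ i = 1}, ∏ q : {i // ξ i = -1}, (f q p)⁻¹ := prod_comm
  rw [hswap]
  ac_rfl

end SignClasses

theorem Matrix.norm_det_le_permanent_norm {n R : Type*} [Fintype n] [DecidableEq n]
    [NormedCommRing R] [NormOneClass R] (M : Matrix n n R) :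
    ‖M.det‖ ≤ (M.map (‖·‖)).permanent := by
  rw [det_apply, permanent]
  refine (norm_sum_le _ _).trans (sum_le_sum fun σ _ => ?_)
  rcases Int.units_eq_one_or (Equiv.Perm.sign σ) with h | h <;>
    simpa [h] using Finset.norm_prod_le _ _

theorem Real.rpow_sum_le_sum_rpow {ι : Type*} (s : Finset ι) {f : ι → ℝ} (hf : ∀ i ∈ s, 0 ≤ f i)
    {p : ℝ} (hp₀ : 0 < p) (hp₁ : p ≤ 1) :
    (∑ i ∈ s, f i) ^ p ≤ ∑ i ∈ s, f i ^ p :=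
  le_sum_of_subadditive_on_pred (· ^ p) (0 ≤ ·) (by simp [Real.zero_rpow hp₀.ne'])
    (fun _ _ hx hy => Real.rpow_add_le_add_rpow hx hy hp₀.le hp₁) (fun _ _ => add_nonneg) f hf

theorem prod_Ioi_norm_sub_zpow_eq_norm_det_cauchy {α K : Type*} [LinearOrder α] [Fintype α]
    [LocallyFiniteOrderTop α] [LocallyFiniteOrderBot α] [NormedField K]
    (x : α → K) (hx : Function.Injective x) (ξ : α → ℤ) (hξ : ∀ i, ξ i = -1 ∨ ξ i = 1)
    (π₀ : {i // ξ i = 1} ≃ {i // ξ i = -1}) :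
    ∏ i, ∏ j ∈ Ioi i, ‖x i - x j‖ ^ (ξ i * ξ j) =
      ‖(of fun p p' : {i // ξ i = 1} => (x p - x (π₀ p'))⁻¹).det‖ := by
  have hx₀ : ∀ p p' : {i // ξ i = 1}, x p ≠ x (π₀ p') := fun p p' =>
    hx.ne (val_pos_ne_val_neg p (π₀ p'))
  rw [← pow_left_inj₀ (prod_nonneg fun i _ => prod_nonneg fun j _ => by positivity)
    (norm_nonneg _) two_ne_zero, ← norm_pow, det_cauchy_sq _ _ hx₀,
    prod_prod_Ioi_sq _ fun i j => by rw [norm_sub_rev, mul_comm],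
    prod_offDiag_zpow_sign_mul_sign ξ hξ]
  simp only [norm_div, norm_mul, norm_pow, norm_prod, apply_ite norm, norm_one]
  have hN : ∏ p, ∏ p', (if p = p' then 1 else ‖x (π₀ p) - x (π₀ p')‖) =
      ∏ q : {i // ξ i = -1}, ∏ q', if q = q' then 1 else ‖x q - x q'‖ := by
    rw [← π₀.prod_comp]
    refine prod_congr rfl fun p _ => ?_
    rw [← π₀.prod_comp]
    simp only [π₀.injective.eq_iff]
  have hD : ∏ p : {i // ξ i = 1}, ∏ q : {i // ξ i = -1}, ‖x p - x q‖⁻¹ * ‖x q - x p‖⁻¹ =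
      ((∏ p : {i // ξ i = 1}, ∏ p', ‖x p - x (π₀ p')‖) ^ 2)⁻¹ := by
    rw [← prod_pow, ← prod_inv_distrib]
    refine prod_congr rfl fun p _ => ?_
    rw [← π₀.prod_comp, ← prod_pow, ← prod_inv_distrib]
    refine prod_congr rfl fun p' _ => ?_
    rw [norm_sub_rev (x (π₀ p' : α)), sq, mul_inv]
  rw [hN, hD, div_eq_mul_inv]

/-- Cauchy double alternant bound: for distinct `x₁,…,x_{2k} ∈ ℂ` and a balanced
sign sequence `ξ ∈ {−1,+1}^{2k}`, with `P = {i : ξ i = +1}` and `N = {i : ξ i = −1}`,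
`∏_{i<j} |x_i−x_j|^{ξ_i ξ_j/4} ≤ ∑_{π : P → N bijection} ∏_{i∈P} |x_i−x_{π(i)}|^{−1/4}`. -/
theorem stmt12 (k : ℕ) (x : Fin (2 * k) → ℂ) (hx : Function.Injective x)
    (ξ : Fin (2 * k) → ℤ) (hξ : ∀ i, ξ i = -1 ∨ ξ i = 1)
    (hbal : ∑ i, ξ i = 0) :
    (∏ i, ∏ j ∈ Finset.Ioi i, ‖x i - x j‖ ^ (((ξ i * ξ j : ℤ) : ℝ) / 4))
      ≤ ∑ π : {i : Fin (2 * k) // ξ i = 1} ≃ {i : Fin (2 * k) // ξ i = -1},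
          ∏ i : {i : Fin (2 * k) // ξ i = 1},
            ‖x i.1 - x (π i).1‖ ^ (-(1 / 4) : ℝ) := by
  obtain ⟨π₀⟩ := Fintype.card_eq.mp (card_pos_eq_card_neg ξ hξ hbal)
  set C := of fun p p' : {i // ξ i = 1} => (x p - x (π₀ p'))⁻¹
  have lhs : ∏ i, ∏ j ∈ Ioi i, ‖x i - x j‖ ^ (((ξ i * ξ j : ℤ) : ℝ) / 4) =
      (∏ i, ∏ j ∈ Ioi i, ‖x i - x j‖ ^ (ξ i * ξ j)) ^ (1 / 4 : ℝ) := by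
    rw [← Real.finsetProd_rpow _ _ fun i _ => prod_nonneg fun j _ => by positivity]
    refine prod_congr rfl fun i _ => ?_
    rw [← Real.finsetProd_rpow _ _ fun j _ => by positivity]
    refine prod_congr rfl fun j _ => ?_
    rw [← Real.rpow_intCast, ← Real.rpow_mul (norm_nonneg _), mul_one_div]
  have rhs : ∑ σ : Equiv.Perm {i // ξ i = 1}, (∏ p, ‖C p (σ p)‖) ^ (1 / 4 : ℝ) =
      ∑ π : {i // ξ i = 1} ≃ {i // ξ i = -1},
        ∏ p : {i // ξ i = 1}, ‖x p - x (π p)‖ ^ (-(1 / 4) : ℝ) := by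
    rw [← (Equiv.equivCongr (Equiv.refl _) π₀).sum_comp]
    refine sum_congr rfl fun σ _ => ?_
    rw [← Real.finsetProd_rpow _ _ fun p _ => norm_nonneg _]
    refine prod_congr rfl fun p _ => ?_
    simp [C, Real.inv_rpow (norm_nonneg _), Real.rpow_neg (norm_nonneg _)]
  calc _ = ‖C.det‖ ^ (1 / 4 : ℝ) := by
        rw [lhs, prod_Ioi_norm_sub_zpow_eq_norm_det_cauchy x hx ξ hξ π₀]
    _ ≤ (∑ σ : Equiv.Perm {i // ξ i = 1}, ∏ p, ‖C p (σ p)‖) ^ (1 / 4 : ℝ) := by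
        gcongr
        refine (norm_det_le_permanent_norm C).trans_eq ?_
        rw [← permanent_transpose]
        rfl
    _ ≤ _ := Real.rpow_sum_le_sum_rpow _ (fun σ _ => by positivity) (by norm_num) (by norm_num)
    _ = _ := rhs
end

section
/- Let Δ : (0,1) × (0,1) → [0,∞) be such that for every ε ∈ (0,1), Δ(δ,ε) → 0 as δ → 0⁺, and let ρ : (0,1) → (0,∞) satisfy ρ(t) → 0 as t → 0⁺. Then there exists a function ε : (0,1) → (0,1) with δ < ε(δ) for small δ and such that, as δ → 0⁺: ε(δ) → 0, δ/ε(δ) → 0, ε(δ)^{ρ(δ/ε(δ))} → 1, and Δ(δ, ε(δ)) → 0. -/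
open Filter Set Topology

/-!
Take `ε(δ) = 2^{-(N(δ)+1)}` with `N(δ) → ∞` slowly. For each fixed `ε` the requirements
`δ < ε²`, `|Δ(δ,ε)| < ε`, `|log ε · ρ(δ/ε)| < ε` hold for all small `δ`; a diagonal choice of `N`
makes them hold at `ε = ε(δ)` for all small `δ`, and then every limit follows by squeezing against
`ε(δ) → 0`, using `ε^ρ = exp (log ε · ρ)`.
-/

theorem Filter.exists_tendsto_atTop_eventually_diag {X : Type*} {l : Filter X}
    [l.IsCountablyGenerated] (hl : l ≤ cofinite) {p : ℕ → X → Prop}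
    (hp : ∀ n, ∀ᶠ x in l, p n x) :
    ∃ N : X → ℕ, Tendsto N l atTop ∧ ∀ᶠ x in l, p (N x) x := by
  obtain ⟨s, hs⟩ := l.exists_antitone_basis
  set T : ℕ → Set X := fun n => {x | ∀ m ≤ n, x ∈ s m ∧ p m x}
  have hT : ∀ n, T n ∈ l := fun n =>
    (eventually_all_finite (finite_Iic n)).2 fun m _ => Eventually.and (hs.mem m) (hp m)
  have hbdd : ∀ x, BddAbove {n | x ∈ T n} := by
    intro x
    obtain ⟨k, hk⟩ := hs.mem_iff.1 (le_cofinite_iff_compl_singleton_mem.1 hl x)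
    refine ⟨k, fun n hn => not_lt.1 fun hkn => ?_⟩
    exact hk (hn k hkn.le).1 rfl
  refine ⟨fun x => sSup {n | x ∈ T n}, tendsto_atTop.2 fun m => ?_, ?_⟩
  · filter_upwards [hT m] with x hx using le_csSup (hbdd x) hx
  · filter_upwards [hT 0] with x hx
    exact (Nat.sSup_mem ⟨0, hx⟩ (hbdd x) _ le_rfl).2

theorem eventually_lt_sq_and_abs_lt {ρ Δ : ℝ → ℝ} (hρ : Tendsto ρ (𝓝[>] 0) (𝓝 0))
    (hΔ : Tendsto Δ (𝓝[>] 0) (𝓝 0)) {ε : ℝ} (hε : 0 < ε) :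
    ∀ᶠ δ in 𝓝[>] 0, δ < ε ^ 2 ∧ |Δ δ| < ε ∧ |Real.log ε * ρ (δ / ε)| < ε := by
  have hscale : Tendsto (fun δ => δ / ε) (𝓝[>] 0) (𝓝[>] 0) := by
    refine tendsto_nhdsWithin_iff.2 ⟨?_, ?_⟩
    · simpa using ((continuous_id.div_const ε).tendsto 0).mono_left nhdsWithin_le_nhds
    · filter_upwards [self_mem_nhdsWithin] with δ (hδ : 0 < δ) using div_pos hδ hε
  have hlog : Tendsto (fun δ => |Real.log ε * ρ (δ / ε)|) (𝓝[>] 0) (𝓝 0) := by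
    simpa using ((hρ.comp hscale).const_mul (Real.log ε)).abs
  have hΔabs : Tendsto (fun δ => |Δ δ|) (𝓝[>] 0) (𝓝 0) := by simpa using hΔ.abs
  filter_upwards [Ioo_mem_nhdsGT (pow_pos hε 2), hΔabs.eventually (gt_mem_nhds hε),
    hlog.eventually (gt_mem_nhds hε)] with δ hδ hΔδ hlogδ using ⟨hδ.2, hΔδ, hlogδ⟩

theorem stmt17_general (Δ : ℝ → ℝ → ℝ)
    (hΔ : ∀ ε ∈ Ioo (0 : ℝ) 1,
      Tendsto (fun δ => Δ δ ε) (nhdsWithin 0 (Ioi 0)) (nhds 0))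
    (ρ : ℝ → ℝ)
    (hρ : Tendsto ρ (nhdsWithin 0 (Ioi 0)) (nhds 0)) :
    ∃ ε : ℝ → ℝ,
      (∀ δ ∈ Ioo (0 : ℝ) 1, ε δ ∈ Ioo (0 : ℝ) 1) ∧
      (∀ᶠ δ in nhdsWithin 0 (Ioi 0), δ < ε δ) ∧
      Tendsto ε (nhdsWithin 0 (Ioi 0)) (nhds 0) ∧
      Tendsto (fun δ => δ / ε δ) (nhdsWithin 0 (Ioi 0)) (nhds 0) ∧
      Tendsto (fun δ => ε δ ^ ρ (δ / ε δ)) (nhdsWithin 0 (Ioi 0)) (nhds 1) ∧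
      Tendsto (fun δ => Δ δ (ε δ)) (nhdsWithin 0 (Ioi 0)) (nhds 0) := by
  set e : ℕ → ℝ := fun n => 2⁻¹ ^ (n + 1)
  have he_mem : ∀ n, e n ∈ Ioo (0 : ℝ) 1 := fun n =>
    ⟨by positivity, pow_lt_one₀ (by norm_num) (by norm_num) n.succ_ne_zero⟩
  have he : Tendsto e atTop (𝓝 0) :=
    (tendsto_pow_atTop_nhds_zero_of_lt_one (by norm_num) (by norm_num)).comp (tendsto_add_atTop_nat 1)
  have hcof : 𝓝[>] (0 : ℝ) ≤ cofinite :=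
    (nhdsWithin_mono 0 fun _ h => ne_of_gt h).trans (nhdsNE_le_cofinite 0)
  obtain ⟨N, hN, hgood⟩ := Filter.exists_tendsto_atTop_eventually_diag hcof
    fun n => eventually_lt_sq_and_abs_lt hρ (hΔ _ (he_mem n)) (he_mem n).1
  have hε : Tendsto (fun δ => e (N δ)) (𝓝[>] 0) (𝓝 0) := he.comp hN
  refine ⟨fun δ => e (N δ), fun δ _ => he_mem (N δ), ?_, hε, ?_, ?_, ?_⟩
  · filter_upwards [hgood] with δ h
    exact h.1.trans (pow_lt_self_of_lt_one₀ (he_mem _).1 (he_mem _).2 one_lt_two)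
  · refine squeeze_zero' ?_ ?_ hε
    · filter_upwards [self_mem_nhdsWithin] with δ (hδ : 0 < δ)
      exact div_nonneg hδ.le (he_mem _).1.le
    · filter_upwards [hgood] with δ h
      rw [div_le_iff₀ (he_mem _).1]
      nlinarith [h.1]
  · have hexp : Tendsto (fun δ => Real.log (e (N δ)) * ρ (δ / e (N δ))) (𝓝[>] 0) (𝓝 0) :=
      squeeze_zero_norm' (hgood.mono fun δ h => h.2.2.le) hε
    rw [← Real.exp_zero]
    refine ((Real.continuous_exp.tendsto 0).comp hexp).congr' ?_
    filter_upwards with δ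
    simp [Function.comp, Real.rpow_def_of_pos (he_mem (N δ)).1]
  · exact squeeze_zero_norm' (hgood.mono fun δ h => h.2.1.le) hε

/-- Choice of a slowly decaying `ε(δ)`: if `Δ(δ,ε) → 0` as `δ → 0⁺` for each fixed
`ε ∈ (0,1)`, and `ρ(t) → 0` as `t → 0⁺`, then there is `ε : (0,1) → (0,1)` with
`δ < ε(δ)` for small `δ`, `ε(δ) → 0`, `δ/ε(δ) → 0`, `ε(δ)^{ρ(δ/ε(δ))} → 1`, and
`Δ(δ, ε(δ)) → 0` as `δ → 0⁺`. -/
theorem stmt17 (Δ : ℝ → ℝ → ℝ)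
    (hΔnn : ∀ δ ∈ Ioo (0 : ℝ) 1, ∀ ε ∈ Ioo (0 : ℝ) 1, 0 ≤ Δ δ ε)
    (hΔ : ∀ ε ∈ Ioo (0 : ℝ) 1,
      Tendsto (fun δ => Δ δ ε) (nhdsWithin 0 (Ioi 0)) (nhds 0))
    (ρ : ℝ → ℝ) (hρpos : ∀ t ∈ Ioo (0 : ℝ) 1, 0 < ρ t)
    (hρ : Tendsto ρ (nhdsWithin 0 (Ioi 0)) (nhds 0)) :
    ∃ ε : ℝ → ℝ,
      (∀ δ ∈ Ioo (0 : ℝ) 1, ε δ ∈ Ioo (0 : ℝ) 1) ∧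
      (∀ᶠ δ in nhdsWithin 0 (Ioi 0), δ < ε δ) ∧
      Tendsto ε (nhdsWithin 0 (Ioi 0)) (nhds 0) ∧
      Tendsto (fun δ => δ / ε δ) (nhdsWithin 0 (Ioi 0)) (nhds 0) ∧
      Tendsto (fun δ => ε δ ^ ρ (δ / ε δ)) (nhdsWithin 0 (Ioi 0)) (nhds 1) ∧
      Tendsto (fun δ => Δ δ (ε δ)) (nhdsWithin 0 (Ioi 0)) (nhds 0) :=
  stmt17_general Δ hΔ ρ hρ
end
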